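/- Let A be a unital C*-algebra, H a complex Hilbert space, P ∈ B(H) positive and invertible, and Φ ∈ CP^{(P)}(A,B(H)). Then the following are equivalent: (i) Φ is a P-C*-extreme point of CP^{(P)}(A,B(H)); (ii) the unital CP map Φ̂(a) = P^{-1/2} Φ(a) P^{-1/2} is a C*-extreme point of UCP(A,B(H)); (iii) Φ = Ad_T∘Ψ for some C*-extreme point Ψ of UCP(A,B(H)) and some invertible T ∈ B(H) with T* T = P; (iv) for every CP map Ψ : A → B(H) with Ψ ≤_cp Φ and Ψ(1) invertible, there exists an invertible Z ∈ B(H) with Ψ = Ad_Z∘Φ. -/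

import Mathlib

open scoped ComplexOrder

noncomputable section

section Defs

variable {A H : Type*}
variable [NormedAddCommGroup H] [InnerProductSpace ℂ H]

/-- An operator on a complex inner product space is positive:
`0 ≤ ⟪x, T x⟫` for all `x`. -/
def IsPosOp (T : H →L[ℂ] H) : Prop := ∀ x : H, 0 ≤ (inner ℂ x (T x) : ℂ)

variable [Ring A] [StarRing A] [Algebra ℂ A]

/-- Complete positivity of a linear map `Φ : A → B(H)`:
`∑_{i,j} ⟪h i, Φ(a i* a j) (h j)⟫ ≥ 0` for all finite families. -/
def IsCPMap (Φ : A →ₗ[ℂ] (H →L[ℂ] H)) : Prop :=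
  ∀ (n : ℕ) (a : Fin n → A) (h : Fin n → H),
    0 ≤ ∑ i, ∑ j, (inner ℂ (h i) ((Φ (star (a i) * a j)) (h j)) : ℂ)

/-- `CP^{(P)}(A, B(H))`: the CP maps `Φ` with `Φ 1 = P`. -/
def CPP (P : H →L[ℂ] H) : Set (A →ₗ[ℂ] (H →L[ℂ] H)) := {Φ | IsCPMap Φ ∧ Φ 1 = P}

/-- `CCP(A, B(H))`: the contractive CP maps, i.e. CP maps with `Φ 1 ≤ 1`. -/
def CCPmaps : Set (A →ₗ[ℂ] (H →L[ℂ] H)) := {Φ | IsCPMap Φ ∧ IsPosOp (1 - Φ 1)}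

variable [CompleteSpace H]

/-- `Ad_T : X ↦ T* X T`, as a linear map on `B(H)`. -/
def conjAd (T : H →L[ℂ] H) : (H →L[ℂ] H) →ₗ[ℂ] (H →L[ℂ] H) where
  toFun X := star T * X * T
  map_add' X Y := by simp [add_mul, mul_add]
  map_smul' c X := by simp [mul_smul_comm, smul_mul_assoc]

/-- `Φ ∈ CP^{(P)}` is a `P`-`C*`-extreme point of `CP^{(P)}(A, B(H))`:
whenever `Φ = ∑ Ad_{T j} ∘ Φs j` is a proper `P`-`C*`-convex combination of members of
`CP^{(P)}`, each `Φs j` equals `Ad_{S j} ∘ Φ` for some invertible `S j`. -/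
def IsPCExtreme (P : H →L[ℂ] H) (Φ : A →ₗ[ℂ] (H →L[ℂ] H)) : Prop :=
  Φ ∈ CPP (A := A) P ∧
  ∀ (n : ℕ) (T : Fin n → (H →L[ℂ] H)) (Φs : Fin n → (A →ₗ[ℂ] (H →L[ℂ] H))),
    (∀ j, IsUnit (T j)) → (∀ j, Φs j ∈ CPP (A := A) P) →
    (∑ j, star (T j) * P * T j) = P →
    Φ = ∑ j, (conjAd (T j)).comp (Φs j) →
    ∀ j, ∃ S : H →L[ℂ] H, IsUnit S ∧ Φs j = (conjAd S).comp Φ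

/-- `Φ ∈ C` is a `C*`-extreme point of the `C*`-convex set `C`:
whenever `Φ = ∑ Ad_{T j} ∘ Φs j` is a proper `C*`-convex combination of members of `C`,
each `Φs j` is unitarily equivalent to `Φ`. -/
def IsCstarExtreme (C : Set (A →ₗ[ℂ] (H →L[ℂ] H))) (Φ : A →ₗ[ℂ] (H →L[ℂ] H)) : Prop :=
  Φ ∈ C ∧
  ∀ (n : ℕ) (T : Fin n → (H →L[ℂ] H)) (Φs : Fin n → (A →ₗ[ℂ] (H →L[ℂ] H))),
    (∀ j, IsUnit (T j)) → (∀ j, Φs j ∈ C) →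
    (∑ j, star (T j) * T j) = 1 →
    Φ = ∑ j, (conjAd (T j)).comp (Φs j) →
    ∀ j, ∃ U : H →L[ℂ] H, U ∈ unitary (H →L[ℂ] H) ∧ Φs j = (conjAd U).comp Φ

/-- `Φ ∈ C` is a linear extreme point of the convex set `C`. -/
def IsLinExtreme (C : Set (A →ₗ[ℂ] (H →L[ℂ] H))) (Φ : A →ₗ[ℂ] (H →L[ℂ] H)) : Prop :=
  Φ ∈ C ∧
  ∀ (n : ℕ) (t : Fin n → ℝ) (Φs : Fin n → (A →ₗ[ℂ] (H →L[ℂ] H))),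
    (∀ j, 0 < t j ∧ t j < 1) → (∀ j, Φs j ∈ C) → (∑ j, t j) = 1 →
    Φ = ∑ j, (t j : ℂ) • Φs j →
    ∀ j, Φs j = Φ

end Defs

section InvConj

variable {A H : Type*} [NormedAddCommGroup H] [InnerProductSpace ℂ H]
variable [Ring A] [StarRing A] [Algebra ℂ A]

/-- The map `a ↦ R⁻¹ Φ(a) R⁻¹`; for `R = P^{1/2}` with `P = Φ(1)` invertible this is the
unital CP map `Φ̂(a) = P^{-1/2} Φ(a) P^{-1/2}`. -/
def invConj (R : H →L[ℂ] H) (Φ : A →ₗ[ℂ] (H →L[ℂ] H)) : A →ₗ[ℂ] (H →L[ℂ] H) where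
  toFun a := Ring.inverse R * Φ a * Ring.inverse R
  map_add' a b := by simp [mul_add, add_mul]
  map_smul' c a := by simp [mul_smul_comm, smul_mul_assoc]

end InvConj


/-!
Conjugation `Φ ↦ Ad_V ∘ Φ` by an invertible `V` maps `CP^{(P)}` onto `CP^{(V* P V)}` and
preserves `P`-`C*`-extremality, while for `P = 1` an invertible `S` with `Ad_S ∘ Φ` unital is
automatically unitary. With `V = P^{-1/2}` this gives (i) ⇔ (ii), and with `V = T` it gives
(iii) ⇒ (i).

For (i) ⇒ (iv), split `Φ = Ψ/2 + (Φ - Ψ/2)`: unlike `Φ - Ψ`, both summands are invertible at `1`.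
A CP map `Θ` with `Θ 1 = Y* Y`, `Y` invertible, equals `Ad_{W⁻¹ Y}` of the member
`Ad_{Y⁻¹ W} ∘ Θ` of `CP^{(P)}`, where `P = W* W`; this turns the splitting into a
`P`-`C*`-convex combination, to which extremality applies. Conversely (iv) ⇒ (i), because every
term `Ad_{T_j} ∘ Φ_j` of a `P`-`C*`-convex combination of `Φ` lies below `Φ` in the CP order and
is invertible at `1`.
-/

lemma CStarAlgebra.exists_unit_star_mul_self_eq {B : Type*} [CStarAlgebra B] [PartialOrder B]
    [StarOrderedRing B] {q : B} (hq : 0 ≤ q) (hqu : IsUnit q) : ∃ y : Bˣ, star (y : B) * y = q :=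
  ⟨((CFC.isUnit_sqrt_iff q).2 hqu).unit, by
    simp [(CFC.sqrt_nonneg q).isSelfAdjoint.star_eq, CFC.sqrt_mul_sqrt_self q]⟩

section Operators

variable {H : Type*} [NormedAddCommGroup H] [InnerProductSpace ℂ H] [CompleteSpace H]

lemma IsPosOp.nonneg {T : H →L[ℂ] H} (hT : IsPosOp T) : 0 ≤ T := by
  rw [ContinuousLinearMap.nonneg_iff_isPositive, ContinuousLinearMap.isPositive_iff']
  have hconj : ∀ x, inner ℂ (T x) x = inner ℂ x (T x) := fun x => by
    rw [← inner_conj_symm, Complex.conj_eq_iff_im.2 (Complex.nonneg_iff.1 (hT x)).2.symm]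
  refine ⟨?_, fun x => hconj x ▸ hT x⟩
  rw [ContinuousLinearMap.isSelfAdjoint_iff_isSymmetric,
    LinearMap.isSymmetric_iff_inner_map_self_real]
  intro x
  simp [hconj]

@[simp]
lemma conjAd_apply (T X : H →L[ℂ] H) : conjAd T X = star T * X * T := rfl

lemma conjAd_comp_conjAd (S T : H →L[ℂ] H) : (conjAd S).comp (conjAd T) = conjAd (T * S) := by
  ext1 X; simp [mul_assoc]

@[simp]
lemma conjAd_one : conjAd (1 : H →L[ℂ] H) = LinearMap.id := by
  ext1 X; simp

lemma conjAd_smul (c : ℂ) (T : H →L[ℂ] H) : conjAd (c • T) = (star c * c) • conjAd T := by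
  ext1 X; simp [smul_smul, mul_comm]

variable {M : Type*} [AddCommMonoid M] [Module ℂ M]

@[simp]
lemma conjAd_comp_conjAd_comp (S T : H →L[ℂ] H) (Φ : M →ₗ[ℂ] (H →L[ℂ] H)) :
    (conjAd S).comp ((conjAd T).comp Φ) = (conjAd (T * S)).comp Φ := by
  rw [← LinearMap.comp_assoc, conjAd_comp_conjAd]

lemma conjAd_comp_sum {ι : Type*} (s : Finset ι) (T : H →L[ℂ] H)
    (F : ι → M →ₗ[ℂ] (H →L[ℂ] H)) :
    (conjAd T).comp (∑ k ∈ s, F k) = ∑ k ∈ s, (conjAd T).comp (F k) := by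
  ext1 a; simp [LinearMap.sum_apply]

lemma invConj_eq_conjAd_comp {A : Type*} [Ring A] [Algebra ℂ A] {R : H →L[ℂ] H}
    (hR : IsSelfAdjoint R) (Φ : A →ₗ[ℂ] (H →L[ℂ] H)) :
    invConj R Φ = (conjAd (Ring.inverse R)).comp Φ := by
  ext1 a
  simp [invConj, hR.ringInverse.star_eq]

lemma conjAd_comp_invConj {A : Type*} [Ring A] [Algebra ℂ A] {R : H →L[ℂ] H}
    (hR : IsSelfAdjoint R) (hRu : IsUnit R) (Φ : A →ₗ[ℂ] (H →L[ℂ] H)) :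
    (conjAd R).comp (invConj R Φ) = Φ := by
  obtain ⟨r, rfl⟩ := hRu
  simp [invConj_eq_conjAd_comp hR]

end Operators

section CompletelyPositive

variable {A H : Type*} [Ring A] [StarRing A] [Algebra ℂ A]
  [NormedAddCommGroup H] [InnerProductSpace ℂ H]

lemma IsCPMap.zero : IsCPMap (0 : A →ₗ[ℂ] (H →L[ℂ] H)) := fun n a h => by simp

lemma IsCPMap.add {Φ Ψ : A →ₗ[ℂ] (H →L[ℂ] H)} (hΦ : IsCPMap Φ) (hΨ : IsCPMap Ψ) :
    IsCPMap (Φ + Ψ) := fun n a h => by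
  simpa only [LinearMap.add_apply, _root_.add_apply, inner_add_right,
    Finset.sum_add_distrib] using add_nonneg (hΦ n a h) (hΨ n a h)

lemma IsCPMap.sum {ι : Type*} (s : Finset ι) {F : ι → A →ₗ[ℂ] (H →L[ℂ] H)}
    (hF : ∀ k ∈ s, IsCPMap (F k)) : IsCPMap (∑ k ∈ s, F k) :=
  Finset.sum_induction F IsCPMap (fun _ _ => IsCPMap.add) IsCPMap.zero hF

lemma IsCPMap.smul {Φ : A →ₗ[ℂ] (H →L[ℂ] H)} (hΦ : IsCPMap Φ) {c : ℂ} (hc : 0 ≤ c) :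
    IsCPMap (c • Φ) := fun n a h => by
  simpa only [LinearMap.smul_apply, _root_.smul_apply, inner_smul_right,
    ← Finset.mul_sum] using mul_nonneg hc (hΦ n a h)

variable [CompleteSpace H]

lemma IsCPMap.conjAd_comp {Φ : A →ₗ[ℂ] (H →L[ℂ] H)} (hΦ : IsCPMap Φ) (T : H →L[ℂ] H) :
    IsCPMap ((conjAd T).comp Φ) := fun n a h => by
  simpa [ContinuousLinearMap.star_eq_adjoint, ContinuousLinearMap.adjoint_inner_right]
    using hΦ n a (fun i => T (h i))

lemma IsCPMap.map_one_nonneg {Φ : A →ₗ[ℂ] (H →L[ℂ] H)} (hΦ : IsCPMap Φ) : 0 ≤ Φ 1 :=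
  IsPosOp.nonneg fun x => by simpa using hΦ 1 (fun _ => 1) (fun _ => x)

lemma conjAd_comp_mem_CPP {P : H →L[ℂ] H} {Φ : A →ₗ[ℂ] (H →L[ℂ] H)} (hΦ : Φ ∈ CPP P)
    (T : H →L[ℂ] H) : (conjAd T).comp Φ ∈ CPP (star T * P * T) :=
  ⟨hΦ.1.conjAd_comp T, by simp [hΦ.2]⟩

end CompletelyPositive

section Extreme

variable {A H : Type*} [Ring A] [StarRing A] [Algebra ℂ A]
  [NormedAddCommGroup H] [InnerProductSpace ℂ H] [CompleteSpace H]

lemma IsPCExtreme.conjAd_comp {P : H →L[ℂ] H} {Φ : A →ₗ[ℂ] (H →L[ℂ] H)}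
    (hΦ : IsPCExtreme P Φ) {V : H →L[ℂ] H} (hV : IsUnit V) :
    IsPCExtreme (star V * P * V) ((conjAd V).comp Φ) := by
  obtain ⟨u, rfl⟩ := hV
  refine ⟨conjAd_comp_mem_CPP hΦ.1 _, fun n T Φs hT hmem hsum heq j => ?_⟩
  have hP : star (u.inv : H →L[ℂ] H) * (star u.val * P * u.val) * u.inv = P := by
    simp [← mul_assoc, ← star_mul]
  have hsum' : ∑ k, star (u.val * T k * u.inv) * P * (u.val * T k * u.inv) = P :=
    calc _ = star u.inv * (∑ k, star (T k) * (star u.val * P * u.val) * T k) * u.inv := by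
          simp [Finset.mul_sum, Finset.sum_mul, mul_assoc]
      _ = P := by rw [hsum, hP]
  have heq' : Φ = ∑ k, (conjAd (u.val * T k * u.inv)).comp ((conjAd u.inv).comp (Φs k)) :=
    calc Φ = (conjAd u.inv).comp ((conjAd u.val).comp Φ) := by simp
      _ = _ := by simp [heq, conjAd_comp_sum, mul_assoc]
  obtain ⟨S, hS, hΦs⟩ := hΦ.2 n _ _ (fun k => (u.isUnit.mul (hT k)).mul u⁻¹.isUnit)
    (fun k => hP ▸ conjAd_comp_mem_CPP (hmem k) _) hsum' heq' j
  refine ⟨u.inv * S * u.val, (u⁻¹.isUnit.mul hS).mul u.isUnit, ?_⟩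
  calc Φs j = (conjAd u.val).comp ((conjAd u.inv).comp (Φs j)) := by simp
    _ = _ := by rw [hΦs]; simp [mul_assoc]

lemma isPCExtreme_conjAd_comp_iff {P V : H →L[ℂ] H} {Φ : A →ₗ[ℂ] (H →L[ℂ] H)} (hV : IsUnit V) :
    IsPCExtreme (star V * P * V) ((conjAd V).comp Φ) ↔ IsPCExtreme P Φ := by
  refine ⟨fun h => ?_, fun h => h.conjAd_comp hV⟩
  obtain ⟨u, rfl⟩ := hV
  simpa [← mul_assoc, ← star_mul] using h.conjAd_comp u⁻¹.isUnit

lemma isPCExtreme_one_iff {Φ : A →ₗ[ℂ] (H →L[ℂ] H)} :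
    IsPCExtreme 1 Φ ↔ IsCstarExtreme (CPP (A := A) 1) Φ := by
  refine ⟨fun h => ⟨h.1, fun n T Φs hT hmem hsum heq j => ?_⟩,
    fun h => ⟨h.1, fun n T Φs hT hmem hsum heq j => ?_⟩⟩
  · obtain ⟨S, hS, hΦs⟩ := h.2 n T Φs hT hmem (by simpa using hsum) heq j
    have hS1 := LinearMap.congr_fun hΦs 1
    simp only [(hmem j).2, LinearMap.comp_apply, h.1.2, conjAd_apply, mul_one] at hS1
    exact ⟨S, hS.mem_unitary_of_star_mul_self hS1.symm, hΦs⟩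
  · obtain ⟨U, hU, hΦs⟩ := h.2 n T Φs hT hmem (by simpa using hsum) heq j
    exact ⟨U, Unitary.isUnit_coe (U := ⟨U, hU⟩), hΦs⟩

lemma IsCstarExtreme.isPCExtreme_conjAd_comp {Ψ : A →ₗ[ℂ] (H →L[ℂ] H)}
    (hΨ : IsCstarExtreme (CPP (A := A) 1) Ψ) {T : H →L[ℂ] H} (hT : IsUnit T) :
    IsPCExtreme (star T * T) ((conjAd T).comp Ψ) := by
  simpa using (isPCExtreme_one_iff.2 hΨ).conjAd_comp hT

lemma isPCExtreme_iff_isCstarExtreme_invConj {P R : H →L[ℂ] H} (hR : IsSelfAdjoint R)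
    (hRu : IsUnit R) (hRR : R * R = P) {Φ : A →ₗ[ℂ] (H →L[ℂ] H)} :
    IsPCExtreme P Φ ↔ IsCstarExtreme (CPP (A := A) 1) (invConj R Φ) := by
  obtain ⟨r, rfl⟩ := hRu
  have hrinv : star (↑r⁻¹ : H →L[ℂ] H) = ↑r⁻¹ := by simpa using hR.ringInverse.star_eq
  have hP1 : star (↑r⁻¹ : H →L[ℂ] H) * P * ↑r⁻¹ = 1 := by simp [← hRR, hrinv, ← mul_assoc]
  rw [invConj_eq_conjAd_comp hR, Ring.inverse_unit, ← isPCExtreme_one_iff, ← hP1,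
    isPCExtreme_conjAd_comp_iff r⁻¹.isUnit]

lemma IsPCExtreme.exists_conjAd_of_eq_sum {P : H →L[ℂ] H} {Φ : A →ₗ[ℂ] (H →L[ℂ] H)}
    (hΦ : IsPCExtreme P Φ) (hP : IsUnit P) {n : ℕ} {Θ : Fin n → A →ₗ[ℂ] (H →L[ℂ] H)}
    (hΘ : ∀ k, IsCPMap (Θ k)) (hΘ1 : ∀ k, IsUnit (Θ k 1)) (hsum : Φ = ∑ k, Θ k) (j : Fin n) :
    ∃ Z, IsUnit Z ∧ Θ j = (conjAd Z).comp Φ := by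
  obtain ⟨w, hw⟩ := CStarAlgebra.exists_unit_star_mul_self_eq (hΦ.1.2 ▸ hΦ.1.1.map_one_nonneg) hP
  choose y hy using fun k =>
    CStarAlgebra.exists_unit_star_mul_self_eq (hΘ k).map_one_nonneg (hΘ1 k)
  have hmem : ∀ k, (conjAd ((y k).inv * w.val)).comp (Θ k) ∈ CPP P := fun k =>
    ⟨(hΘ k).conjAd_comp _, by simp [← hy k, ← hw, ← star_mul, ← mul_assoc]⟩
  have hsumP : ∑ k, star (w.inv * (y k).val) * P * (w.inv * (y k).val) = P :=
    calc _ = ∑ k, Θ k 1 := by simp [← hy, ← hw, ← star_mul, ← mul_assoc]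
      _ = P := by rw [← hΦ.1.2, hsum, LinearMap.sum_apply]
  have heq : Φ = ∑ k, (conjAd (w.inv * (y k).val)).comp
      ((conjAd ((y k).inv * w.val)).comp (Θ k)) := by
    simp [hsum, mul_assoc]
  obtain ⟨S, hS, hΦs⟩ := hΦ.2 n _ _ (fun k => w⁻¹.isUnit.mul (y k).isUnit) hmem hsumP heq j
  refine ⟨S * (w.inv * (y j).val), hS.mul (w⁻¹.isUnit.mul (y j).isUnit), ?_⟩
  calc Θ j = (conjAd (w.inv * (y j).val)).comp ((conjAd ((y j).inv * w.val)).comp (Θ j)) := by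
        simp [mul_assoc]
    _ = _ := by rw [hΦs, conjAd_comp_conjAd_comp]

lemma IsPCExtreme.exists_conjAd_of_cp_le {P : H →L[ℂ] H} {Φ : A →ₗ[ℂ] (H →L[ℂ] H)}
    (hΦ : IsPCExtreme P Φ) (hP : IsUnit P) {Ψ : A →ₗ[ℂ] (H →L[ℂ] H)} (hΨ : IsCPMap Ψ)
    (hΦΨ : IsCPMap (Φ - Ψ)) (hΨ1 : IsUnit (Ψ 1)) :
    ∃ Z, IsUnit Z ∧ Ψ = (conjAd Z).comp Φ := by
  set Ψ' := (2⁻¹ : ℂ) • Ψ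
  have hΨ' : IsCPMap Ψ' := hΨ.smul (by positivity)
  have hΨ'1 : IsUnit (Ψ' 1) := hΨ1.smul (Units.mk0 (2⁻¹ : ℂ) (by norm_num))
  have hle : Ψ' 1 ≤ (Φ - Ψ') 1 := by
    rw [← sub_nonneg]
    convert hΦΨ.map_one_nonneg using 1
    simp only [Ψ', LinearMap.sub_apply, LinearMap.smul_apply]
    module
  have hrest : IsCPMap (Φ - Ψ') := by
    convert hΦΨ.add hΨ' using 1
    simp only [Ψ']
    module
  have hrest1 : IsUnit ((Φ - Ψ') 1) :=
    CStarAlgebra.isUnit_of_le _ hle (hΨ'1.isStrictlyPositive hΨ'.map_one_nonneg)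
  obtain ⟨Z, hZ, hΨZ⟩ := hΦ.exists_conjAd_of_eq_sum hP (Θ := ![Ψ', Φ - Ψ'])
    (Fin.forall_fin_two.2 ⟨hΨ', hrest⟩) (Fin.forall_fin_two.2 ⟨hΨ'1, hrest1⟩) (by simp) 0
  refine ⟨(Real.sqrt 2 : ℂ) • Z, hZ.smul (Units.mk0 (Real.sqrt 2 : ℂ) (by simp)), ?_⟩
  have h2 : star (Real.sqrt 2 : ℂ) * (Real.sqrt 2 : ℂ) = 2 := by simp [← Complex.ofReal_mul]
  rw [conjAd_smul, h2, LinearMap.smul_comp, ← hΨZ]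
  simp only [Matrix.cons_val_zero, Ψ']
  module

lemma isPCExtreme_of_forall_cp_le {P : H →L[ℂ] H} {Φ : A →ₗ[ℂ] (H →L[ℂ] H)} (hΦ : Φ ∈ CPP P)
    (hP : IsUnit P) (h : ∀ Ψ : A →ₗ[ℂ] (H →L[ℂ] H), IsCPMap Ψ → IsCPMap (Φ - Ψ) →
      IsUnit (Ψ 1) → ∃ Z, IsUnit Z ∧ Ψ = (conjAd Z).comp Φ) :
    IsPCExtreme P Φ := by
  refine ⟨hΦ, fun n T Φs hT hmem hsum heq j => ?_⟩
  have hrest : Φ - (conjAd (T j)).comp (Φs j) =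
      ∑ k ∈ Finset.univ.erase j, (conjAd (T k)).comp (Φs k) := by
    rw [heq, ← Finset.sum_erase_add _ _ (Finset.mem_univ j), add_sub_cancel_right]
  obtain ⟨Z, hZ, hΦs⟩ := h _ ((hmem j).1.conjAd_comp _)
    (hrest ▸ IsCPMap.sum _ fun k _ => (hmem k).1.conjAd_comp _)
    (by simpa [(hmem j).2] using ((hT j).star.mul hP).mul (hT j))
  obtain ⟨u, hu⟩ := hT j
  refine ⟨Z * u.inv, hZ.mul u⁻¹.isUnit, ?_⟩
  calc Φs j = (conjAd u.inv).comp ((conjAd (T j)).comp (Φs j)) := by simp [← hu]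
    _ = _ := by rw [hΦs, conjAd_comp_conjAd_comp]

end Extreme

theorem stmt10_general {A : Type*} [NormedRing A] [StarRing A] [NormedAlgebra ℂ A]
    {H : Type*} [NormedAddCommGroup H] [InnerProductSpace ℂ H] [CompleteSpace H]
    (P R : H →L[ℂ] H) (hPinv : IsUnit P)
    (hR : IsPosOp R) (hRR : R * R = P)
    (Φ : A →ₗ[ℂ] (H →L[ℂ] H)) (hΦ : Φ ∈ CPP (A := A) P) :
    (IsPCExtreme P Φ ↔
      IsCstarExtreme (CPP (A := A) (1 : H →L[ℂ] H)) (invConj R Φ)) ∧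
    (IsCstarExtreme (CPP (A := A) (1 : H →L[ℂ] H)) (invConj R Φ) ↔
      ∃ (Ψ : A →ₗ[ℂ] (H →L[ℂ] H)) (T : H →L[ℂ] H),
        IsCstarExtreme (CPP (A := A) (1 : H →L[ℂ] H)) Ψ ∧ IsUnit T ∧
        star T * T = P ∧ Φ = (conjAd T).comp Ψ) ∧
    ((∃ (Ψ : A →ₗ[ℂ] (H →L[ℂ] H)) (T : H →L[ℂ] H),
        IsCstarExtreme (CPP (A := A) (1 : H →L[ℂ] H)) Ψ ∧ IsUnit T ∧
        star T * T = P ∧ Φ = (conjAd T).comp Ψ) ↔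
      ∀ Ψ : A →ₗ[ℂ] (H →L[ℂ] H), IsCPMap Ψ → IsCPMap (Φ - Ψ) → IsUnit (Ψ 1) →
        ∃ Z : H →L[ℂ] H, IsUnit Z ∧ Ψ = (conjAd Z).comp Φ) := by
  have hRsa : IsSelfAdjoint R := hR.nonneg.isSelfAdjoint
  have hRu : IsUnit R := isUnit_mul_self_iff.1 (hRR ▸ hPinv)
  have h12 : IsPCExtreme P Φ ↔ IsCstarExtreme (CPP (A := A) 1) (invConj R Φ) :=
    isPCExtreme_iff_isCstarExtreme_invConj hRsa hRu hRR
  have h23 (h : IsCstarExtreme (CPP (A := A) 1) (invConj R Φ)) :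
      ∃ (Ψ : A →ₗ[ℂ] (H →L[ℂ] H)) (T : H →L[ℂ] H), IsCstarExtreme (CPP (A := A) 1) Ψ ∧
        IsUnit T ∧ star T * T = P ∧ Φ = (conjAd T).comp Ψ :=
    ⟨_, R, h, hRu, by rw [hRsa.star_eq, hRR], (conjAd_comp_invConj hRsa hRu Φ).symm⟩
  have h31 : (∃ (Ψ : A →ₗ[ℂ] (H →L[ℂ] H)) (T : H →L[ℂ] H),
      IsCstarExtreme (CPP (A := A) 1) Ψ ∧ IsUnit T ∧ star T * T = P ∧
        Φ = (conjAd T).comp Ψ) → IsPCExtreme P Φ := by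
    rintro ⟨Ψ, T, hΨ, hT, rfl, rfl⟩
    exact hΨ.isPCExtreme_conjAd_comp hT
  have h14 : IsPCExtreme P Φ ↔ ∀ Ψ : A →ₗ[ℂ] (H →L[ℂ] H), IsCPMap Ψ → IsCPMap (Φ - Ψ) →
      IsUnit (Ψ 1) → ∃ Z : H →L[ℂ] H, IsUnit Z ∧ Ψ = (conjAd Z).comp Φ :=
    ⟨fun h _ => h.exists_conjAd_of_cp_le hPinv, isPCExtreme_of_forall_cp_le hΦ hPinv⟩
  exact ⟨h12, ⟨h23, fun h => h12.1 (h31 h)⟩,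
    ⟨fun h => h14.1 (h31 h), fun h => h23 (h12.1 (h14.2 h))⟩⟩

/-- Theorem `thm-P-Cext-char`. For `P` positive invertible and
`Φ ∈ CP^{(P)}`, with `R = P^{1/2}` the positive square root, the following are equivalent:
(i) `Φ` is a `P`-`C*`-extreme point; (ii) `Φ̂ = P^{-1/2} Φ(·) P^{-1/2}` is a `C*`-extreme
point of `UCP(A,B(H)) = CP^{(1)}`; (iii) `Φ = Ad_T ∘ Ψ` for some `C*`-extreme `Ψ` of UCP and
invertible `T` with `T* T = P`; (iv) every CP map `Ψ ≤_cp Φ` with `Ψ(1)` invertible equals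
`Ad_Z ∘ Φ` for some invertible `Z`. -/
theorem stmt10 {A : Type*} [NormedRing A] [StarRing A] [CStarRing A] [NormedAlgebra ℂ A] [StarModule ℂ A] [CompleteSpace A]
    {H : Type*} [NormedAddCommGroup H] [InnerProductSpace ℂ H] [CompleteSpace H]
    (P R : H →L[ℂ] H) (hP : IsPosOp P) (hPinv : IsUnit P)
    (hR : IsPosOp R) (hRR : R * R = P)
    (Φ : A →ₗ[ℂ] (H →L[ℂ] H)) (hΦ : Φ ∈ CPP (A := A) P) :
    (IsPCExtreme P Φ ↔
      IsCstarExtreme (CPP (A := A) (1 : H →L[ℂ] H)) (invConj R Φ)) ∧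
    (IsCstarExtreme (CPP (A := A) (1 : H →L[ℂ] H)) (invConj R Φ) ↔
      ∃ (Ψ : A →ₗ[ℂ] (H →L[ℂ] H)) (T : H →L[ℂ] H),
        IsCstarExtreme (CPP (A := A) (1 : H →L[ℂ] H)) Ψ ∧ IsUnit T ∧
        star T * T = P ∧ Φ = (conjAd T).comp Ψ) ∧
    ((∃ (Ψ : A →ₗ[ℂ] (H →L[ℂ] H)) (T : H →L[ℂ] H),
        IsCstarExtreme (CPP (A := A) (1 : H →L[ℂ] H)) Ψ ∧ IsUnit T ∧
        star T * T = P ∧ Φ = (conjAd T).comp Ψ) ↔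
      ∀ Ψ : A →ₗ[ℂ] (H →L[ℂ] H), IsCPMap Ψ → IsCPMap (Φ - Ψ) → IsUnit (Ψ 1) →
        ∃ Z : H →L[ℂ] H, IsUnit Z ∧ Ψ = (conjAd Z).comp Φ) :=
  stmt10_general P R hPinv hR hRR Φ hΦ

end
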